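/- arXiv:2209.06777 — 9 statements merged into one kernel-verified Lean document; each statement's English description precedes it below -/
import Mathlib

section
/- Let 𝒳 be a finite set and let P be any property of choice rules on 𝒳 (a choice axiom). Then P is punctual — i.e., there exists a correspondence φ assigning to each A ⊆ 𝒳 a collection φ(A) of subsets of A such that a choice rule C satisfies P if and only if C(A) ∈ φ(A) for every A ⊆ 𝒳 — if and only if P is closed under combinations: for all choice rules C, C′, C″ on 𝒳, if C′ and C″ satisfy P and for every A ⊆ 𝒳 either C(A) = C′(A) or C(A) = C″(A), then C satisfies P. -/
/-!
Given closure under combinations, take `φ A` to be the set of values `C A` realised by choice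
rules satisfying `P`. If every value of a rule `C` is realised in this way, then splicing the
realising rules together one menu at a time produces rules satisfying `P` that agree with `C` on
ever larger finite sets of menus; since there are only finitely many menus, `C` itself is
reached.
-/

namespace ChoiceAxiom

variable {ι : Type*} {β : ι → Type*}

/-- With `ι` the menus `A` and `s A` the subsets of `A`, the functions with `f i ∈ s i` for all `i`
are the choice rules and this is punctuality of the choice axiom `P`. -/
def IsPunctualOn (s : ∀ i, Set (β i)) (P : (∀ i, β i) → Prop) : Prop :=
  ∃ φ : ∀ i, Set (β i), (∀ i, φ i ⊆ s i) ∧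
    ∀ f, (∀ i, f i ∈ s i) → (P f ↔ ∀ i, f i ∈ φ i)

def IsClosedUnderCombinationsOn (s : ∀ i, Set (β i)) (P : (∀ i, β i) → Prop) : Prop :=
  ∀ f g h : ∀ i, β i, (∀ i, f i ∈ s i) → (∀ i, g i ∈ s i) → (∀ i, h i ∈ s i) →
    P g → P h → (∀ i, f i = g i ∨ f i = h i) → P f

variable {s : ∀ i, Set (β i)} {P : (∀ i, β i) → Prop}

theorem IsPunctualOn.isClosedUnderCombinationsOn (hP : IsPunctualOn s P) :
    IsClosedUnderCombinationsOn s P := by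
  obtain ⟨φ, -, hφ⟩ := hP
  intro f g h hf hg hh hPg hPh hcomb
  refine (hφ f hf).2 fun i => ?_
  rcases hcomb i with hfg | hfh
  · exact hfg ▸ (hφ g hg).1 hPg i
  · exact hfh ▸ (hφ h hh).1 hPh i

theorem IsClosedUnderCombinationsOn.exists_agreeing_on_finset
    (hP : IsClosedUnderCombinationsOn s P)
    {f : ∀ i, β i} (hfP : ∀ i, ∃ g : ∀ i, β i, (∀ j, g j ∈ s j) ∧ P g ∧ g i = f i)
    [Nonempty ι] (S : Finset ι) :
    ∃ g : ∀ i, β i, (∀ j, g j ∈ s j) ∧ P g ∧ ∀ i ∈ S, g i = f i := by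
  classical
  induction S using Finset.induction_on with
  | empty =>
    obtain ⟨g, hg, hPg, -⟩ := hfP (Classical.arbitrary ι)
    exact ⟨g, hg, hPg, by simp⟩
  | insert a S _ ih =>
    obtain ⟨g, hg, hPg, hgS⟩ := ih
    obtain ⟨e, he, hPe, hea⟩ := hfP a
    have hupdate_mem : ∀ j, Function.update g a (e a) j ∈ s j :=
      (Function.forall_update_iff g fun j y => y ∈ s j).2 ⟨he a, fun j _ => hg j⟩
    refine ⟨Function.update g a (e a), hupdate_mem, ?_, ?_⟩
    · exact hP _ e g hupdate_mem he hg hPe hPg <|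
        (Function.forall_update_iff g fun j y => y = e j ∨ y = g j).2
          ⟨Or.inl rfl, fun _ _ => Or.inr rfl⟩
    · exact (Function.forall_update_iff g fun i y => i ∈ insert a S → y = f i).2
        ⟨fun _ => hea, fun i hia hi => hgS i (Finset.mem_of_mem_insert_of_ne hi hia)⟩

theorem IsClosedUnderCombinationsOn.isPunctualOn [Finite ι] [Nonempty ι]
    (hP : IsClosedUnderCombinationsOn s P) : IsPunctualOn s P := by
  have := Fintype.ofFinite ι
  refine ⟨fun i => {y | ∃ g : ∀ i, β i, (∀ j, g j ∈ s j) ∧ P g ∧ g i = y}, ?_, ?_⟩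
  · rintro i _ ⟨g, hg, -, rfl⟩
    exact hg i
  · refine fun f hf => ⟨fun hPf i => ⟨f, hf, hPf, rfl⟩, fun hfP => ?_⟩
    obtain ⟨g, -, hPg, hgf⟩ := hP.exists_agreeing_on_finset hfP Finset.univ
    rwa [← funext fun i => hgf i (Finset.mem_univ i)]

theorem isPunctualOn_iff_isClosedUnderCombinationsOn [Finite ι] [Nonempty ι] :
    IsPunctualOn s P ↔ IsClosedUnderCombinationsOn s P :=
  ⟨IsPunctualOn.isClosedUnderCombinationsOn, IsClosedUnderCombinationsOn.isPunctualOn⟩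

end ChoiceAxiom

open ChoiceAxiom in
theorem punctual_iff_closed_under_combinations_general
    {α : Type*} [Fintype α]
    (P : (Finset α → Finset α) → Prop) :
    (∃ φ : Finset α → Set (Finset α),
        (∀ A : Finset α, ∀ Y ∈ φ A, Y ⊆ A) ∧
        ∀ C : Finset α → Finset α, (∀ A, C A ⊆ A) →
          (P C ↔ ∀ A, C A ∈ φ A)) ↔
    (∀ C C' C'' : Finset α → Finset α,
        (∀ A, C A ⊆ A) → (∀ A, C' A ⊆ A) → (∀ A, C'' A ⊆ A) →
        P C' → P C'' →
        (∀ A, C A = C' A ∨ C A = C'' A) → P C) :=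
  isPunctualOn_iff_isClosedUnderCombinationsOn (s := fun A : Finset α => {Y | Y ⊆ A}) (P := P)

/-- A choice rule on a finite set `α` is a map `C : Finset α → Finset α`
with `C A ⊆ A` for every `A`.  A choice axiom is a property `P` of choice
rules.  `P` is *punctual* if there is a correspondence `φ` assigning to each
`A ⊆ 𝒳` a collection `φ A` of subsets of `A` such that a choice rule
satisfies `P` iff it is a selection from `φ`. -/
theorem punctual_iff_closed_under_combinations
    {α : Type*} [Fintype α] [DecidableEq α]
    (P : (Finset α → Finset α) → Prop) :
    (∃ φ : Finset α → Set (Finset α),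
        (∀ A : Finset α, ∀ Y ∈ φ A, Y ⊆ A) ∧
        ∀ C : Finset α → Finset α, (∀ A, C A ⊆ A) →
          (P C ↔ ∀ A, C A ∈ φ A)) ↔
    (∀ C C' C'' : Finset α → Finset α,
        (∀ A, C A ⊆ A) → (∀ A, C' A ⊆ A) → (∀ A, C'' A ⊆ A) →
        P C' → P C'' →
        (∀ A, C A = C' A ∨ C A = C'' A) → P C) :=
  punctual_iff_closed_under_combinations_general P
end

section
/- Let 𝒳 be a finite set containing at least two elements. Then path independence is not a punctual axiom: there is no correspondence φ assigning to each A ⊆ 𝒳 a collection φ(A) of subsets of A such that a choice rule C on 𝒳 satisfies path independence if and only if C(A) ∈ φ(A) for every A ⊆ 𝒳. -/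
/-- A choice rule `C` satisfies *path independence* if
`C (A ∪ B) = C (C A ∪ B)` for all `A, B`. -/
def PathIndependent {α : Type*} [DecidableEq α]
    (C : Finset α → Finset α) : Prop :=
  ∀ A B : Finset α, C (A ∪ B) = C (C A ∪ B)

/-- On a finite set with at least two elements, path independence is not a
punctual choice axiom. -/
theorem pathIndependent_not_punctual
    {α : Type*} [Fintype α] [DecidableEq α]
    (h : 2 ≤ Fintype.card α) :
    ¬ ∃ φ : Finset α → Set (Finset α),
        (∀ A : Finset α, ∀ Y ∈ φ A, Y ⊆ A) ∧
        ∀ C : Finset α → Finset α, (∀ A, C A ⊆ A) →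
          (PathIndependent C ↔ ∀ A, C A ∈ φ A) := by
  rintro ⟨φ, hsub, hiff⟩
  obtain ⟨a, b, hab⟩ := Fintype.exists_pair_of_one_lt_card (α := α) (by omega)
  -- Two path-independent rules
  have h1 : PathIndependent (fun X : Finset α => X) := fun A B => rfl
  have h2 : PathIndependent (fun X : Finset α => X.erase a) := by
    intro A B
    ext x
    simp only [Finset.mem_erase, Finset.mem_union]
    tauto
  have m1 : ∀ A : Finset α, A ∈ φ A :=
    (hiff (fun X => X) (fun A => le_refl A)).mp h1
  have m2 : ∀ A : Finset α, A.erase a ∈ φ A :=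
    (hiff (fun X => X.erase a) (fun A => Finset.erase_subset a A)).mp h2
  -- The mixture
  set D : Finset α → Finset α := fun X => if b ∈ X then X else X.erase a with hD
  have hDsub : ∀ A, D A ⊆ A := by
    intro A
    simp only [hD]
    split
    · exact le_refl A
    · exact Finset.erase_subset a A
  have hDmem : ∀ A, D A ∈ φ A := by
    intro A
    simp only [hD]
    split
    · exact m1 A
    · exact m2 A
  have hDPI : PathIndependent D := (hiff D hDsub).mpr hDmem
  have key := hDPI {a} {b}
  have hba : b ∉ ({a} : Finset α) := by
    simp [hab.symm]
  have hDA : D {a} = ∅ := by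
    simp [hD, hba]
  rw [hDA] at key
  have hb2 : b ∈ ({a} : Finset α) ∪ {b} := by simp
  have hb3 : b ∈ (∅ : Finset α) ∪ {b} := by simp
  simp only [hD, if_pos hb2, if_pos hb3] at key
  -- key : {a} ∪ {b} = ∅ ∪ {b}
  have : a ∈ (∅ : Finset α) ∪ ({b} : Finset α) := by
    rw [← key]; simp
  simp [hab] at this
end

section
/- Let 𝒳 be a finite set containing at least two elements. Then size monotonicity is not a punctual axiom: there is no correspondence φ assigning to each A ⊆ 𝒳 a collection φ(A) of subsets of A such that a choice rule C on 𝒳 satisfies size monotonicity if and only if C(A) ∈ φ(A) for every A ⊆ 𝒳. -/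
/-- A choice rule `C` satisfies *size monotonicity* if `A ⊆ B` implies
`|C A| ≤ |C B|`. -/
def SizeMonotone {α : Type*} (C : Finset α → Finset α) : Prop :=
  ∀ A B : Finset α, A ⊆ B → (C A).card ≤ (C B).card

/-- On a finite set with at least two elements, size monotonicity is not a
punctual choice axiom. -/
theorem sizeMonotone_not_punctual
    {α : Type*} [Fintype α] [DecidableEq α]
    (h : 2 ≤ Fintype.card α) :
    ¬ ∃ φ : Finset α → Set (Finset α),
        (∀ A : Finset α, ∀ Y ∈ φ A, Y ⊆ A) ∧
        ∀ C : Finset α → Finset α, (∀ A, C A ⊆ A) →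
          (SizeMonotone C ↔ ∀ A, C A ∈ φ A) := by
  rintro ⟨φ, -, hiff⟩
  -- identity rule is size monotone
  have hid : ∀ A : Finset α, A ∈ φ A := by
    have := (hiff (fun A => A) (fun A => le_refl A)).mp
      (fun A B hAB => Finset.card_le_card hAB)
    exact this
  have hempty : ∀ A : Finset α, (∅ : Finset α) ∈ φ A := by
    have := (hiff (fun _ => ∅) (fun A => Finset.empty_subset A)).mp
      (fun A B _ => le_refl _)
    exact this
  -- a bad rule
  set C : Finset α → Finset α := fun A => if A = Finset.univ then ∅ else A with hC
  have hsub : ∀ A, C A ⊆ A := by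
    intro A
    simp only [hC]
    split
    · exact Finset.empty_subset A
    · exact le_refl A
  have hmem : ∀ A, C A ∈ φ A := by
    intro A
    simp only [hC]
    split
    · exact hempty A
    · exact hid A
  have hmono : SizeMonotone C := (hiff C hsub).mpr hmem
  obtain ⟨a⟩ := Fintype.card_pos_iff.mp (by omega : 0 < Fintype.card α)
  have hne : ({a} : Finset α) ≠ Finset.univ := by
    intro hconc
    have hcard : ({a} : Finset α).card = Fintype.card α := by
      rw [hconc, Finset.card_univ]
    rw [Finset.card_singleton] at hcard
    omega
  have := hmono {a} Finset.univ (Finset.subset_univ _)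
  simp only [hC, if_neg hne, if_pos rfl, Finset.card_singleton, Finset.card_empty] at this
  omega
end

section
/- Let 𝒳 be a finite set, ≻ a strict linear order on 𝒳, and q a natural number. There exists exactly one choice rule C on 𝒳 that satisfies non-wastefulness (for every A ⊆ 𝒳, |C(A)| = min(|A|, q)) and no justified envy (for every A ⊆ 𝒳, x ∈ C(A), and y ∈ A \ C(A), we have x ≻ y); namely the responsive choice rule that selects from each A its min(|A|, q) highest-priority elements with respect to ≻. -/
/-- The *responsive* choice rule with priority order `>` and capacity `q`:
from each `A` it selects the `min |A| q` highest-priority elements, i.e. the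
elements of `A` having fewer than `q` elements of `A` above them. -/
def responsiveRule {α : Type*} [LinearOrder α] (q : ℕ) (A : Finset α) :
    Finset α :=
  A.filter fun x => (A.filter fun y => x < y).card < q

section Aux

variable {α : Type*} [LinearOrder α]

/-- rank of `x` in `A`: number of elements of `A` above `x`. -/
private def rk (A : Finset α) (x : α) : ℕ := (A.filter fun y => x < y).card

private lemma rk_strict {A : Finset α} {x y : α} (hy : y ∈ A) (hxy : x < y) :
    rk A y < rk A x := by
  apply Finset.card_lt_card
  rw [Finset.ssubset_def]
  constructor
  · intro z hz
    simp only [Finset.mem_filter] at *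
    exact ⟨hz.1, hxy.trans hz.2⟩
  · intro h
    have := h (Finset.mem_filter.mpr ⟨hy, hxy⟩)
    simp at this

private lemma rk_injOn (A : Finset α) : Set.InjOn (rk A) A := by
  intro x hx y hy hxy
  rcases lt_trichotomy x y with h | h | h
  · exact absurd hxy (rk_strict hy h).ne'
  · exact h
  · exact absurd hxy (rk_strict (Finset.mem_coe.mp hx) h).ne

private lemma rk_lt_card {A : Finset α} {x : α} (hx : x ∈ A) : rk A x < A.card := by
  have hsub : (A.filter fun y => x < y) ⊆ A.erase x := by
    intro z hz
    simp only [Finset.mem_filter] at hz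
    exact Finset.mem_erase.mpr ⟨ne_of_gt hz.2, hz.1⟩
  calc rk A x ≤ (A.erase x).card := Finset.card_le_card hsub
    _ < A.card := Finset.card_erase_lt_of_mem hx

private lemma rk_image (A : Finset α) : A.image (rk A) = Finset.range A.card := by
  apply Finset.eq_of_subset_of_card_le
  · intro n hn
    simp only [Finset.mem_image] at hn
    obtain ⟨x, hx, rfl⟩ := hn
    exact Finset.mem_range.mpr (rk_lt_card hx)
  · rw [Finset.card_range, Finset.card_image_of_injOn (rk_injOn A)]

private lemma responsive_card (q : ℕ) (A : Finset α) :
    (responsiveRule q A).card = min A.card q := by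
  have h1 : (responsiveRule q A).card = ((responsiveRule q A).image (rk A)).card := by
    rw [Finset.card_image_of_injOn ((rk_injOn A).mono (by
      intro x hx; exact Finset.filter_subset _ _ hx))]
  rw [h1]
  have h2 : (responsiveRule q A).image (rk A) = (A.image (rk A)).filter (· < q) := by
    rw [Finset.filter_image]
    rfl
  rw [h2, rk_image]
  have : (Finset.range A.card).filter (· < q) = Finset.range (min A.card q) := by
    ext k
    simp only [Finset.mem_filter, Finset.mem_range, lt_min_iff]
  simp [this]

private lemma responsive_envy (q : ℕ) (A : Finset α) :
    ∀ x ∈ responsiveRule q A, ∀ y ∈ A \ responsiveRule q A, x > y := by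
  intro x hx y hy
  simp only [responsiveRule, Finset.mem_filter, Finset.mem_sdiff] at hx hy
  have hyA := hy.1
  have hyr : ¬ (A.filter fun z => y < z).card < q := fun h => hy.2 ⟨hyA, h⟩
  rcases lt_trichotomy x y with h | h | h
  · exact absurd (lt_trans (rk_strict hyA h) hx.2) hyr
  · exact absurd hx.2 (h ▸ hyr)
  · exact h

end Aux

/-- There is exactly one choice rule satisfying non-wastefulness and
no justified envy, namely the responsive choice rule. -/
theorem responsive_characterization
    {α : Type*} [Fintype α] [LinearOrder α] (q : ℕ)
    (C : Finset α → Finset α) (hC : ∀ A, C A ⊆ A) :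
    ((∀ A : Finset α, (C A).card = min A.card q) ∧
      (∀ A : Finset α, ∀ x ∈ C A, ∀ y ∈ A \ C A, x > y)) ↔
    (∀ A : Finset α, C A = responsiveRule q A) := by
  constructor
  · rintro ⟨hcard, henvy⟩ A
    by_contra hne
    have hcards : (C A).card = (responsiveRule q A).card := by
      rw [hcard, responsive_card]
    -- there must be x ∈ C A \ R A and y ∈ R A \ C A
    have hx : (C A \ responsiveRule q A).Nonempty := by
      rw [Finset.sdiff_nonempty]
      intro hsub
      exact hne (Finset.eq_of_subset_of_card_le hsub (le_of_eq hcards.symm))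
    have hy : (responsiveRule q A \ C A).Nonempty := by
      rw [Finset.sdiff_nonempty]
      intro hsub
      exact hne (Finset.eq_of_subset_of_card_le hsub (le_of_eq hcards)).symm
    obtain ⟨x, hx⟩ := hx
    obtain ⟨y, hy⟩ := hy
    rw [Finset.mem_sdiff] at hx hy
    have hxA : x ∈ A := hC A hx.1
    have hyA : y ∈ A := Finset.filter_subset _ _ hy.1
    have h1 : x > y := henvy A x hx.1 y (Finset.mem_sdiff.mpr ⟨hyA, hy.2⟩)
    have h2 : y > x := responsive_envy q A y hy.1 x (Finset.mem_sdiff.mpr ⟨hxA, hx.2⟩)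
    exact absurd h1 (not_lt_of_gt h2)
  · intro h
    constructor
    · intro A; rw [h A, responsive_card]
    · intro A; rw [h A]; exact responsive_envy q A
end

section
/- Let 𝒳 be a finite set, ≻ a strict linear order on 𝒳, and q a natural number. Every choice rule C on 𝒳 that satisfies non-wastefulness (|C(A)| = min(|A|, q) for all A ⊆ 𝒳) and no justified envy (for all A ⊆ 𝒳, x ∈ C(A) and y ∈ A \ C(A) imply x ≻ y) satisfies path independence and size monotonicity. -/
/-- Every choice rule satisfying non-wastefulness and no justified envy
(with respect to a strict linear priority order `>` and capacity `q`)
satisfies path independence and size monotonicity. -/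
theorem nonWasteful_noJustifiedEnvy_imp_pathIndependent_sizeMonotone
    {α : Type*} [Fintype α] [LinearOrder α] (q : ℕ)
    (C : Finset α → Finset α) (hC : ∀ A, C A ⊆ A)
    (hNW : ∀ A : Finset α, (C A).card = min A.card q)
    (hNJE : ∀ A : Finset α, ∀ x ∈ C A, ∀ y ∈ A \ C A, x > y) :
    (∀ A B : Finset α, C (A ∪ B) = C (C A ∪ B)) ∧
    (∀ A B : Finset α, A ⊆ B → (C A).card ≤ (C B).card) := by
  have hchar : ∀ (A : Finset α) (x : α),
      x ∈ C A ↔ x ∈ A ∧ (A.filter (fun y => x ≤ y)).card ≤ q := by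
    intro A x
    constructor
    · intro hx
      have hxA := hC A hx
      refine ⟨hxA, ?_⟩
      have hsub : A.filter (fun y => x ≤ y) ⊆ C A := by
        intro y hy
        simp only [Finset.mem_filter] at hy
        by_contra hyC
        exact absurd (hNJE A x hx y (Finset.mem_sdiff.mpr ⟨hy.1, hyC⟩))
          (not_lt.mpr hy.2)
      have h1 := Finset.card_le_card hsub
      have h2 := hNW A
      omega
    · rintro ⟨hxA, hcard⟩
      by_contra hxC
      have hsub : insert x (C A) ⊆ A.filter (fun y => x ≤ y) := by
        intro y hy
        rcases Finset.mem_insert.mp hy with rfl | hy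
        · exact Finset.mem_filter.mpr ⟨hxA, le_refl _⟩
        · exact Finset.mem_filter.mpr ⟨hC A hy,
            le_of_lt (hNJE A y hy x (Finset.mem_sdiff.mpr ⟨hxA, hxC⟩))⟩
      have h1 : (C A).card + 1 ≤ (A.filter (fun y => x ≤ y)).card := by
        have := Finset.card_le_card hsub
        rwa [Finset.card_insert_of_notMem hxC] at this
      have h2 := hNW A
      have h3 : (C A).card = A.card := by omega
      have h4 : C A = A := Finset.eq_of_subset_of_card_le (hC A) (le_of_eq h3.symm)
      exact hxC (h4.symm ▸ hxA)
  constructor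
  · intro A B
    have hDsub : C A ∪ B ⊆ A ∪ B := Finset.union_subset_union_left (hC A)
    ext x
    rw [hchar (A ∪ B) x, hchar (C A ∪ B) x]
    constructor
    · rintro ⟨hx, hcard⟩
      have hxD : x ∈ C A ∪ B := by
        rcases Finset.mem_union.mp hx with hA | hB
        · refine Finset.mem_union_left _ ((hchar A x).mpr ⟨hA, ?_⟩)
          refine le_trans (Finset.card_le_card ?_) hcard
          exact Finset.filter_subset_filter _ Finset.subset_union_left
        · exact Finset.mem_union_right _ hB
      exact ⟨hxD, le_trans (Finset.card_le_card
        (Finset.filter_subset_filter _ hDsub)) hcard⟩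
    · rintro ⟨hxD, hcard⟩
      refine ⟨hDsub hxD, ?_⟩
      by_contra hgt
      push_neg at hgt
      have hex : ∃ y ∈ (A ∪ B).filter (fun y => x ≤ y), y ∉ C A ∪ B := by
        by_contra h
        push_neg at h
        have hsub : (A ∪ B).filter (fun y => x ≤ y) ⊆
            (C A ∪ B).filter (fun y => x ≤ y) := fun y hy =>
          Finset.mem_filter.mpr ⟨h y hy, (Finset.mem_filter.mp hy).2⟩
        have := Finset.card_le_card hsub
        omega
      obtain ⟨y, hyS, hyD⟩ := hex
      simp only [Finset.mem_filter, Finset.mem_union] at hyS hyD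
      push_neg at hyD
      have hyA : y ∈ A := by tauto
      have hyCA : y ∉ C A := hyD.1
      have hxy : x ≤ y := hyS.2
      have hxCA : x ∉ C A := by
        intro hx
        exact absurd (hNJE A x hx y (Finset.mem_sdiff.mpr ⟨hyA, hyCA⟩))
          (not_lt.mpr hxy)
      have hCAq : (C A).card = q := by
        have h1 : C A ⊂ A := Finset.ssubset_iff_of_subset (hC A) |>.mpr ⟨y, hyA, hyCA⟩
        have h2 := Finset.card_lt_card h1
        have h3 := hNW A
        omega
      have hsub : insert x (C A) ⊆ (C A ∪ B).filter (fun y => x ≤ y) := by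
        intro z hz
        rcases Finset.mem_insert.mp hz with rfl | hz
        · exact Finset.mem_filter.mpr ⟨hxD, le_refl _⟩
        · refine Finset.mem_filter.mpr ⟨Finset.mem_union_left _ hz, ?_⟩
          exact le_of_lt (lt_of_le_of_lt hxy
            (hNJE A z hz y (Finset.mem_sdiff.mpr ⟨hyA, hyCA⟩)))
      have h1 := Finset.card_le_card hsub
      rw [Finset.card_insert_of_notMem hxCA] at h1
      omega
  · intro A B hAB
    have h1 := Finset.card_le_card hAB
    have h2 := hNW A
    have h3 := hNW B
    omega
end

section
/- Let M be a matroid with rank function r on a finite ground set 𝒳, ≻ a strict linear order on 𝒳, q a natural number, and G ⊆ 𝒳 a set of guaranteed contracts with |G| ≤ q. There exists exactly one choice rule C on 𝒳 satisfying all of: (i) guaranteed enrollment: A ∩ G ⊆ C(A) for every A ⊆ 𝒳; (ii) maximal utilization of reservations: for every A ⊆ 𝒳 and x ∈ A \ C(A), if |C(A)| < q then r(C(A) ∪ {x}) = r(C(A)), and if |C(A)| = q then for every y ∈ C(A) \ G, r((C(A) \ {y}) ∪ {x}) ≤ r(C(A)); (iii) no justified envy under reserves: for every A ⊆ 𝒳,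 x ∈ C(A) \ G, and y ∈ A \ C(A), if y ≻ x then r((C(A) \ {x}) ∪ {y}) < r(C(A)); (iv) non-wastefulness: |C(A)| = min(|A|, q) for every A ⊆ 𝒳. -/
/-!
For each set of applicants `A`, a maximiser of the rank, with ties broken in colex order, among
the `min |A| q`-subsets of `A` containing `A ∩ G` satisfies all four conditions: the swaps in (ii)
and (iii) stay in that family, and trading `x` for a higher `y` moves up in colex.

For uniqueness, a basis-exchange argument shows that (ii) forces maximal rank in that family, so
any two valid choices `C₁ ≠ C₂` have the same rank. Let `w ∈ C₂ \ C₁` be the highest element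
where they differ. By (iii) for `C₁`, trading any non-guaranteed `x ∈ C₁` below `w` for `w`
lowers the rank; by submodularity, trading all `k` of them lowers it by `k`. Since `C₂` agrees
with `C₁` above `w` and on `G`, it is this trade plus only `k - 1` further elements, so
`rank C₂ < rank C₁`.
-/

/-- A matroid on the finite ground set `α`, given by its independent sets. -/
structure FinMatroid (α : Type*) [DecidableEq α] where
  Indep : Finset α → Prop
  indep_empty : Indep ∅
  indep_subset : ∀ ⦃A B : Finset α⦄, Indep B → A ⊆ B → Indep A
  indep_exchange : ∀ ⦃A B : Finset α⦄, Indep A → Indep B → A.card < B.card →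
    ∃ x ∈ B, x ∉ A ∧ Indep (insert x A)

open Classical in
/-- The rank of a set: the common cardinality of its maximal independent
subsets. -/
noncomputable def FinMatroid.rank {α : Type*} [DecidableEq α]
    (M : FinMatroid α) (X : Finset α) : ℕ :=
  (X.powerset.filter fun A => M.Indep A).sup Finset.card

/-- `Y` is a basis of `X`: a maximal independent subset of `X`. -/
def FinMatroid.IsBasisOf {α : Type*} [DecidableEq α]
    (M : FinMatroid α) (Y X : Finset α) : Prop :=
  Y ⊆ X ∧ M.Indep Y ∧ ∀ Z : Finset α, Z ⊆ X → M.Indep Z → Y ⊆ Z → Z = Y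

open Finset

namespace FinMatroid

variable {α : Type*} [DecidableEq α] (M : FinMatroid α)

theorem card_le_rank_of_indep {I X : Finset α} (hI : M.Indep I) (hIX : I ⊆ X) :
    I.card ≤ M.rank X := by
  unfold rank
  refine le_sup ?_
  simp only [mem_filter, mem_powerset]
  exact ⟨hIX, hI⟩

theorem exists_indep_card_eq_rank (X : Finset α) :
    ∃ B ⊆ X, M.Indep B ∧ B.card = M.rank X := by
  classical
  obtain ⟨B, hB, hsup⟩ := exists_mem_eq_sup
    (X.powerset.filter fun A => M.Indep A) ⟨∅, by simp [M.indep_empty]⟩ card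
  simp only [mem_filter, mem_powerset] at hB
  exact ⟨B, hB.1, hB.2, by rw [rank, hsup]⟩

theorem rank_le_card (X : Finset α) : M.rank X ≤ X.card := by
  obtain ⟨B, hBX, -, hB⟩ := M.exists_indep_card_eq_rank X
  exact hB ▸ card_le_card hBX

theorem rank_mono {X Y : Finset α} (h : X ⊆ Y) : M.rank X ≤ M.rank Y := by
  obtain ⟨B, hBX, hBi, hB⟩ := M.exists_indep_card_eq_rank X
  exact hB ▸ M.card_le_rank_of_indep hBi (hBX.trans h)

theorem exists_indep_superset_card_eq_rank {I X : Finset α} (hI : M.Indep I) (hIX : I ⊆ X) :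
    ∃ J, I ⊆ J ∧ J ⊆ X ∧ M.Indep J ∧ J.card = M.rank X := by
  classical
  obtain ⟨J, hJ, hmax⟩ := exists_max_image
    (X.powerset.filter fun J => I ⊆ J ∧ M.Indep J) card ⟨I, by simp [hIX, hI]⟩
  simp only [mem_filter, mem_powerset] at hJ hmax
  obtain ⟨hJX, hIJ, hJi⟩ := hJ
  refine ⟨J, hIJ, hJX, hJi, (M.card_le_rank_of_indep hJi hJX).antisymm (not_lt.1 fun hlt => ?_)⟩
  obtain ⟨B, hBX, hBi, hB⟩ := M.exists_indep_card_eq_rank X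
  obtain ⟨e, heB, heJ, hei⟩ := M.indep_exchange hJi hBi (hB ▸ hlt)
  have := hmax (insert e J)
    ⟨insert_subset (hBX heB) hJX, hIJ.trans (subset_insert e J), hei⟩
  rw [card_insert_of_notMem heJ] at this
  omega

theorem rank_inter_add_rank_union_le (X Y : Finset α) :
    M.rank (X ∩ Y) + M.rank (X ∪ Y) ≤ M.rank X + M.rank Y := by
  obtain ⟨B, hBXY, hBi, hB⟩ := M.exists_indep_card_eq_rank (X ∩ Y)
  obtain ⟨J, hBJ, hJXY, hJi, hJ⟩ :=
    M.exists_indep_superset_card_eq_rank hBi (hBXY.trans inter_subset_union)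
  have hX := M.card_le_rank_of_indep (M.indep_subset hJi (inter_subset_left : J ∩ X ⊆ J))
    inter_subset_right
  have hY := M.card_le_rank_of_indep (M.indep_subset hJi (inter_subset_left : J ∩ Y ⊆ J))
    inter_subset_right
  have hunion : J ∩ X ∪ J ∩ Y = J := by
    rw [← inter_union_distrib_left, inter_eq_left.2 hJXY]
  have hinter : B.card ≤ (J ∩ X ∩ (J ∩ Y)).card := by
    refine card_le_card fun b hb => ?_
    have hbXY := mem_inter.1 (hBXY hb)
    simp [hBJ hb, hbXY.1, hbXY.2]
  have := card_union_add_card_inter (J ∩ X) (J ∩ Y)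
  rw [hunion] at this
  omega

theorem rank_union_le_rank_add_card (X Y : Finset α) :
    M.rank (X ∪ Y) ≤ M.rank X + Y.card := by
  have := M.rank_inter_add_rank_union_le X Y
  have := M.rank_le_card Y
  omega

theorem rank_insert_sdiff_add_card_le {w : α} {C Y : Finset α} (hY : Y.Nonempty)
    (h : ∀ x ∈ Y, M.rank (insert w (C.erase x)) < M.rank C) :
    M.rank (insert w (C \ Y)) + Y.card ≤ M.rank C := by
  induction hY using Nonempty.cons_induction with
  | singleton x =>
    have := h x (mem_singleton_self x)
    rw [sdiff_singleton_eq_erase, card_singleton]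
    omega
  | cons x Y hxY _ ih =>
    have hrest := ih fun y hy => h y (mem_cons_of_mem hy)
    have hx := h x (mem_cons_self x Y)
    have hsub := M.rank_inter_add_rank_union_le (insert w (C \ Y)) (insert w (C.erase x))
    rw [← insert_inter_distrib, ← insert_union_distrib] at hsub
    have hinter : C \ Y ∩ C.erase x = C \ cons x Y hxY := by
      ext c
      simp only [mem_inter, mem_sdiff, mem_erase, mem_cons]
      tauto
    have hunion : M.rank C ≤ M.rank (insert w (C \ Y ∪ C.erase x)) := by
      refine M.rank_mono fun c hc => mem_insert_of_mem ?_
      by_cases hcY : c ∈ Y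
      · exact mem_union_right _ (mem_erase.2 ⟨fun h => hxY (h ▸ hcY), hc⟩)
      · exact mem_union_left _ (mem_sdiff.2 ⟨hc, hcY⟩)
    rw [hinter] at hsub
    rw [card_cons]
    omega

theorem rank_le_of_forall_swap {K C S : Finset α} (hKC : K ⊆ C) (hKS : K ⊆ S)
    (hcard : S.card ≤ C.card)
    (hswap : ∀ x ∈ S \ C, ∀ y ∈ C \ K, M.rank (insert x (C.erase y)) ≤ M.rank C) :
    M.rank S ≤ M.rank C := by
  by_contra! hlt
  obtain ⟨B, hBK, hBi, hB⟩ := M.exists_indep_card_eq_rank K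
  obtain ⟨I, hBI, hIC, hIi, hI⟩ := M.exists_indep_superset_card_eq_rank hBi (hBK.trans hKC)
  obtain ⟨J, hJS, hJi, hJ⟩ := M.exists_indep_card_eq_rank S
  obtain ⟨x, hxJ, hxI, hIx⟩ := M.indep_exchange hIi hJi (by omega)
  have hIx_card : (insert x I).card = I.card + 1 := card_insert_of_notMem hxI
  have hxC : x ∉ C := fun hxC => by
    have := M.card_le_rank_of_indep hIx (insert_subset hxC hIC)
    omega
  -- Otherwise `I` would contain `B` together with all of `C \ K`, hence be as large as `rank S`.
  obtain ⟨y, hy, hyI⟩ : ∃ y ∈ C \ K, y ∉ I := by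
    by_contra! hCI
    have hS : M.rank S ≤ M.rank K + (S \ K).card := by
      simpa [union_sdiff_of_subset hKS] using M.rank_union_le_rank_add_card K (S \ K)
    have hBC : B.card + (C \ K).card ≤ I.card := by
      rw [← card_union_of_disjoint (disjoint_sdiff.mono_left hBK)]
      exact card_le_card (union_subset hBI hCI)
    rw [card_sdiff_of_subset hKS] at hS
    rw [card_sdiff_of_subset hKC] at hBC
    omega
  have := M.card_le_rank_of_indep hIx
    (insert_subset_insert x fun i hi => mem_erase.2 ⟨ne_of_mem_of_not_mem hi hyI, hIC hi⟩)
  have := hswap x (mem_sdiff.2 ⟨hJS hxJ, hxC⟩) y hy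
  omega

end FinMatroid

section ChoiceRule

variable {α : Type*} [LinearOrder α]

-- Conditions (ii) (for `|C| = q`) and (iii) on the choice `C` from `A`, `f` standing for the rank.
def NoRankGainingSwap (f : Finset α → ℕ) (G A C : Finset α) : Prop :=
  ∀ x ∈ A \ C, ∀ y ∈ C \ G, f (insert x (C.erase y)) ≤ f C

def NoJustifiedEnvy (f : Finset α → ℕ) (G A C : Finset α) : Prop :=
  ∀ x ∈ C \ G, ∀ y ∈ A \ C, y > x → f (insert y (C.erase x)) < f C

theorem card_eq_of_card_eq_min_of_mem_sdiff {A C : Finset α} {q : ℕ} {x : α} (hCA : C ⊆ A)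
    (hC : C.card = min A.card q) (hx : x ∈ A \ C) : C.card = q := by
  have := card_lt_card ((ssubset_iff_of_subset hCA).2 ⟨x, mem_sdiff.1 hx⟩)
  omega

theorem exists_noRankGainingSwap_noJustifiedEnvy (f : Finset α → ℕ) {G A : Finset α} {n : ℕ}
    (hGn : (A ∩ G).card ≤ n) (hnA : n ≤ A.card) :
    ∃ C ⊆ A, A ∩ G ⊆ C ∧ C.card = n ∧ NoRankGainingSwap f G A C ∧ NoJustifiedEnvy f G A C := by
  set F := A.powerset.filter fun C => A ∩ G ⊆ C ∧ C.card = n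
  obtain ⟨C₀, hGC₀, hC₀A, hC₀⟩ :=
    exists_subsuperset_card_eq inter_subset_left hGn hnA
  obtain ⟨C, hC, hmax⟩ := F.exists_max_image (fun C => toLex (f C, toColex C))
    ⟨C₀, mem_filter.2 ⟨mem_powerset.2 hC₀A, hGC₀, hC₀⟩⟩
  obtain ⟨hCA, hGC, hCn⟩ : C ⊆ A ∧ A ∩ G ⊆ C ∧ C.card = n := by simpa [F] using hC
  have hswap_mem : ∀ x ∈ A \ C, ∀ y ∈ C \ G, insert x (C.erase y) ∈ F := by
    intro x hx y hy
    obtain ⟨hxA, hxC⟩ := mem_sdiff.1 hx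
    obtain ⟨hyC, hyG⟩ := mem_sdiff.1 hy
    refine mem_filter.2 ⟨mem_powerset.2 ?_, fun z hz => ?_, ?_⟩
    · exact insert_subset hxA ((erase_subset y C).trans hCA)
    · exact mem_insert_of_mem (mem_erase.2
        ⟨fun h => hyG (h ▸ (mem_inter.1 hz).2), hGC hz⟩)
    · rw [card_insert_of_notMem fun h => hxC (mem_of_mem_erase h),
        card_erase_add_one hyC, hCn]
  refine ⟨C, hCA, hGC, hCn, fun x hx y hy => ?_, fun x hx y hy hxy => ?_⟩
  · exact Prod.Lex.monotone_fst _ _ (hmax _ (hswap_mem x hx y hy))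
  · have hcolex : toColex C < toColex (insert y (C.erase x)) := by
      conv_lhs => rw [← insert_erase (mem_sdiff.1 hx).1]
      exact (Colex.insert_lt_insert (notMem_erase x C)
        fun h => (mem_sdiff.1 hy).2 (mem_of_mem_erase h)).2 hxy
    by_contra! hle
    refine (hmax _ (hswap_mem y hy x hx)).not_gt (Prod.Lex.toLex_lt_toLex.2 ?_)
    rcases hle.lt_or_eq with hlt | heq
    · exact Or.inl hlt
    · exact Or.inr ⟨heq, hcolex⟩

namespace FinMatroid

variable (M : FinMatroid α)

theorem rank_lt_of_noJustifiedEnvy {G A C₁ C₂ : Finset α} {w : α}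
    (henvy : NoJustifiedEnvy M.rank G A C₁) (hwA : w ∈ A) (hw₁ : w ∉ C₁) (hw₂ : w ∈ C₂)
    (hagree : ∀ c ∈ C₁, c ∈ G ∨ w < c → c ∈ C₂) (hcard : C₂.card ≤ C₁.card) :
    M.rank C₂ < M.rank C₁ := by
  set P := C₁.filter fun c => c ∈ G ∨ w < c
  have hPC₁ : P ⊆ C₁ := filter_subset _ _
  have hPC₂ : insert w P ⊆ C₂ :=
    insert_subset hw₂ fun c hc => hagree c (mem_filter.1 hc).1 (mem_filter.1 hc).2
  have hwP : w ∉ P := fun h => hw₁ (mem_filter.1 h).1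
  have hcard₁ := card_sdiff_add_card_eq_card hPC₁
  have hcard₂ := card_sdiff_add_card_eq_card hPC₂
  rw [card_insert_of_notMem hwP] at hcard₂
  have hlow : ∀ x ∈ C₁ \ P, M.rank (insert w (C₁.erase x)) < M.rank C₁ := by
    intro x hx
    obtain ⟨hxC, hxP⟩ := mem_sdiff.1 hx
    simp only [P, mem_filter, not_and, not_or, not_lt] at hxP
    obtain ⟨hxG, hxw⟩ := hxP hxC
    exact henvy x (mem_sdiff.2 ⟨hxC, hxG⟩) w (mem_sdiff.2 ⟨hwA, hw₁⟩)
      (hxw.lt_of_ne fun h => hw₁ (h ▸ hxC))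
  have h₁ := M.rank_insert_sdiff_add_card_le (card_pos.1 (by omega)) hlow
  rw [Finset.sdiff_sdiff_eq_self hPC₁] at h₁
  have h₂ : M.rank C₂ ≤ M.rank (insert w P) + (C₂ \ insert w P).card := by
    calc M.rank C₂ = M.rank (insert w P ∪ (C₂ \ insert w P)) := by
          rw [union_sdiff_of_subset hPC₂]
      _ ≤ _ := M.rank_union_le_rank_add_card _ _
  omega

theorem eq_of_noRankGainingSwap_of_noJustifiedEnvy {G A C₁ C₂ : Finset α}
    (hC₁A : C₁ ⊆ A) (hC₂A : C₂ ⊆ A) (hGC₁ : A ∩ G ⊆ C₁) (hGC₂ : A ∩ G ⊆ C₂)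
    (hcard : C₁.card = C₂.card)
    (hswap₁ : NoRankGainingSwap M.rank G A C₁) (hswap₂ : NoRankGainingSwap M.rank G A C₂)
    (henvy₁ : NoJustifiedEnvy M.rank G A C₁) (henvy₂ : NoJustifiedEnvy M.rank G A C₂) :
    C₁ = C₂ := by
  by_contra hne
  obtain ⟨w, hw, hmax⟩ := (symmDiff C₁ C₂).exists_max_image id (symmDiff_nonempty.2 hne)
  wlog hw₂ : w ∈ C₂ generalizing C₁ C₂
  · rw [symmDiff_comm] at hw hmax
    exact this hC₂A hC₁A hGC₂ hGC₁ hcard.symm hswap₂ hswap₁ henvy₂ henvy₁ (Ne.symm hne)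
      hw hmax (by simp_all [mem_symmDiff])
  have hw₁ : w ∉ C₁ := by simp_all [mem_symmDiff]
  have hagree : ∀ c ∈ C₁, c ∈ G ∨ w < c → c ∈ C₂ := by
    rintro c hc (hcG | hwc)
    · exact hGC₂ (mem_inter.2 ⟨hC₁A hc, hcG⟩)
    · by_contra hc₂
      exact (hmax c (mem_symmDiff.2 (Or.inl ⟨hc, hc₂⟩))).not_gt hwc
  have hlt := M.rank_lt_of_noJustifiedEnvy henvy₁ (hC₂A hw₂) hw₁ hw₂ hagree hcard.ge
  refine hlt.not_ge (M.rank_le_of_forall_swap hGC₂ hGC₁ hcard.le fun x hx y hy => ?_)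
  obtain ⟨hyC, hyG⟩ := mem_sdiff.1 hy
  exact hswap₂ x (mem_sdiff.2 ⟨hC₁A (mem_sdiff.1 hx).1, (mem_sdiff.1 hx).2⟩)
    y (mem_sdiff.2 ⟨hyC, fun hG => hyG (mem_inter.2 ⟨hC₂A hyC, hG⟩)⟩)

end FinMatroid

end ChoiceRule

theorem guaranteedEnrollment_characterization_general
    {α : Type*} [LinearOrder α]
    (M : FinMatroid α) (q : ℕ) (G : Finset α) (hG : G.card ≤ q) :
    ∃! C : Finset α → Finset α,
      (∀ A : Finset α, C A ⊆ A) ∧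
      -- (i) guaranteed enrollment for returning students
      (∀ A : Finset α, A ∩ G ⊆ C A) ∧
      -- (ii) maximal utilization of reservations
      (∀ A : Finset α, ∀ x ∈ A \ C A,
        ((C A).card < q → M.rank (insert x (C A)) = M.rank (C A)) ∧
        ((C A).card = q → ∀ y ∈ C A \ G,
          M.rank (insert x ((C A).erase y)) ≤ M.rank (C A))) ∧
      -- (iii) no justified envy under reserves
      (∀ A : Finset α, ∀ x ∈ C A \ G, ∀ y ∈ A \ C A,
        y > x → M.rank (insert y ((C A).erase x)) < M.rank (C A)) ∧
      -- (iv) non-wastefulness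
      (∀ A : Finset α, (C A).card = min A.card q) := by
  choose C hCA hGC hCcard hswap henvy using fun A : Finset α =>
    exists_noRankGainingSwap_noJustifiedEnvy M.rank (G := G) (n := min A.card q)
      (le_min (card_le_card inter_subset_left)
        ((card_le_card inter_subset_right).trans hG)) (min_le_left _ _)
  refine ⟨C, ⟨hCA, hGC, fun A x hx => ⟨fun hlt => ?_, fun _ => hswap A x hx⟩, henvy, hCcard⟩, ?_⟩
  · exact absurd (card_eq_of_card_eq_min_of_mem_sdiff (hCA A) (hCcard A) hx) hlt.ne
  rintro C' ⟨hC'A, hGC', hii, hiii, hC'card⟩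
  funext A
  exact M.eq_of_noRankGainingSwap_of_noJustifiedEnvy (hC'A A) (hCA A) (hGC' A) (hGC A)
    (by rw [hC'card, hCcard])
    (fun x hx => (hii A x hx).2 (card_eq_of_card_eq_min_of_mem_sdiff (hC'A A) (hC'card A) hx))
    (hswap A) (hiii A) (henvy A)

/-- There is exactly one choice rule satisfying guaranteed enrollment,
maximal utilization of reservations, no justified envy under reserves, and
non-wastefulness (the guaranteed-enrollment choice rule). -/
theorem guaranteedEnrollment_characterization
    {α : Type*} [Fintype α] [LinearOrder α]
    (M : FinMatroid α) (q : ℕ) (G : Finset α) (hG : G.card ≤ q) :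
    ∃! C : Finset α → Finset α,
      (∀ A : Finset α, C A ⊆ A) ∧
      -- (i) guaranteed enrollment for returning students
      (∀ A : Finset α, A ∩ G ⊆ C A) ∧
      -- (ii) maximal utilization of reservations
      (∀ A : Finset α, ∀ x ∈ A \ C A,
        ((C A).card < q → M.rank (insert x (C A)) = M.rank (C A)) ∧
        ((C A).card = q → ∀ y ∈ C A \ G,
          M.rank (insert x ((C A).erase y)) ≤ M.rank (C A))) ∧
      -- (iii) no justified envy under reserves
      (∀ A : Finset α, ∀ x ∈ C A \ G, ∀ y ∈ A \ C A,
        y > x → M.rank (insert y ((C A).erase x)) < M.rank (C A)) ∧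
      -- (iv) non-wastefulness
      (∀ A : Finset α, (C A).card = min A.card q) :=
  guaranteedEnrollment_characterization_general M q G hG
end

section
/- Let M be a matroid on a finite ground set E and ≻ a strict linear order on E. For every X ⊆ E there exists a basis Y* of X (a maximal independent subset of X) such that for every basis Y of X the following holds: writing y*₁ ≻ y*₂ ≻ ⋯ ≻ y*ₘ and y₁ ≻ y₂ ≻ ⋯ ≻ yₘ for the enumerations of Y* and Y in decreasing order of ≻ (all bases of X have the same cardinality m), for every k ∈ {1, …, m} either y*ₖ ≻ yₖ or y*ₖ = yₖ. -/
open Finset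

namespace Finset

variable {α : Type*} [LinearOrder α]

lemma strictMonoOn_card_filter_le (s : Finset α) :
    StrictMonoOn (fun a => #(s.filter (· ≤ a))) s :=
  fun _ _ b hb hab => card_lt_card <| (ssubset_iff_of_subset
    (monotone_filter_right _ fun _ _ hc => hc.trans hab.le)).2
      ⟨b, mem_filter.2 ⟨hb, le_rfl⟩, fun h => (mem_filter.1 h).2.not_gt hab⟩

lemma card_filter_orderEmbOfFin_le {s : Finset α} {k : ℕ} (h : s.card = k) (i : Fin k) :
    #(s.filter (s.orderEmbOfFin h i ≤ ·)) = k - i := by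
  have : s.filter (s.orderEmbOfFin h i ≤ ·) = (Ici i).map (s.orderEmbOfFin h).toEmbedding := by
    ext a
    constructor
    · intro hmem
      obtain ⟨j, rfl⟩ : a ∈ Set.range (s.orderEmbOfFin h) := by
        rw [range_orderEmbOfFin]; exact (mem_filter.1 hmem).1
      simpa using (mem_filter.1 hmem).2
    · simp only [mem_map, mem_Ici, RelEmbedding.coe_toEmbedding]
      rintro ⟨j, hij, rfl⟩
      exact mem_filter.2 ⟨orderEmbOfFin_mem s h j, (s.orderEmbOfFin h).monotone hij⟩
  rw [this, card_map, Fin.card_Ici]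

lemma forall₂_sort_of_card_filter_le {s t : Finset α} (hcard : s.card = t.card)
    (h : ∀ a, #(s.filter (a ≤ ·)) ≤ #(t.filter (a ≤ ·))) :
    List.Forall₂ (· ≤ ·) (s.sort (· ≤ ·)) (t.sort (· ≤ ·)) := by
  rw [← listMap_orderEmbOfFin_finRange s rfl, ← listMap_orderEmbOfFin_finRange t hcard.symm,
    List.forall₂_map_left_iff, List.forall₂_map_right_iff, List.forall₂_same]
  intro i _
  by_contra! hba
  set a := s.orderEmbOfFin rfl i
  set b := t.orderEmbOfFin hcard.symm i
  have hta : #(t.filter (a ≤ ·)) < #(t.filter (b ≤ ·)) := card_lt_card <|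
    (ssubset_iff_of_subset (monotone_filter_right _ fun _ _ hc => hba.le.trans hc)).2
      ⟨b, mem_filter.2 ⟨orderEmbOfFin_mem _ _ _, le_rfl⟩,
        fun h => (mem_filter.1 h).2.not_gt hba⟩
  have hsa := h a
  rw [card_filter_orderEmbOfFin_le] at hsa hta
  omega

end Finset

namespace FinMatroid

section Basis

variable {α : Type*} [DecidableEq α] {M : FinMatroid α} {X Y Z : Finset α}

lemma exists_augment {C D : Finset α} (hC : M.Indep C) (hD : M.Indep D) (hCD : C.card ≤ D.card) :
    ∃ E, C ⊆ E ∧ E ⊆ C ∪ D ∧ M.Indep E ∧ E.card = D.card := by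
  obtain ⟨n, hn⟩ : ∃ n, D.card - C.card = n := ⟨_, rfl⟩
  induction n generalizing C with
  | zero => exact ⟨C, subset_rfl, subset_union_left, hC, by omega⟩
  | succ n ih =>
    obtain ⟨x, hxD, hxC, hx⟩ := M.indep_exchange hC hD (by omega)
    obtain ⟨E, hCE, hE, hEI, hEc⟩ :=
      ih hx (by rw [card_insert_of_notMem hxC]; omega) (by rw [card_insert_of_notMem hxC]; omega)
    refine ⟨E, (subset_insert _ _).trans hCE, hE.trans ?_, hEI, hEc⟩
    exact union_subset (insert_subset (mem_union_right _ hxD) subset_union_left) subset_union_right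

lemma IsBasisOf.card_le (hY : M.IsBasisOf Y X) (hZX : Z ⊆ X) (hZ : M.Indep Z) :
    Z.card ≤ Y.card := by
  by_contra! hlt
  obtain ⟨x, hxZ, hxY, hx⟩ := M.indep_exchange hY.2.1 hZ hlt
  have := hY.2.2 _ (insert_subset (hZX hxZ) hY.1) hx (subset_insert _ _)
  exact hxY (this ▸ mem_insert_self x Y)

lemma IsBasisOf.card_eq (hY : M.IsBasisOf Y X) (hZ : M.IsBasisOf Z X) : Y.card = Z.card :=
  le_antisymm (hZ.card_le hY.1 hY.2.1) (hY.card_le hZ.1 hZ.2.1)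

lemma isBasisOf_of_forall_card_le (hYX : Y ⊆ X) (hY : M.Indep Y)
    (h : ∀ Z ⊆ X, M.Indep Z → Z.card ≤ Y.card) : M.IsBasisOf Y X :=
  ⟨hYX, hY, fun Z hZX hZ hYZ => (eq_of_subset_of_card_le hYZ (h Z hZX hZ)).symm⟩

lemma exists_isBasisOf (M : FinMatroid α) (X : Finset α) : ∃ Y, M.IsBasisOf Y X := by
  classical
  obtain ⟨Y, hY, hmax⟩ := exists_max_image (X.powerset.filter M.Indep) card
    ⟨∅, mem_filter.2 ⟨empty_mem_powerset X, M.indep_empty⟩⟩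
  rw [mem_filter, mem_powerset] at hY
  exact ⟨Y, isBasisOf_of_forall_card_le hY.1 hY.2 fun Z hZX hZ =>
    hmax Z (mem_filter.2 ⟨mem_powerset.2 hZX, hZ⟩)⟩

end Basis

section MaxWeight

variable {α β : Type*} [AddCommMonoid β] [LinearOrder β]

def IsMaxWeightBasis [DecidableEq α] (M : FinMatroid α) (w : α → β) (Y X : Finset α) :
    Prop :=
  M.IsBasisOf Y X ∧ ∀ Z, M.IsBasisOf Z X → ∑ z ∈ Z, w z ≤ ∑ y ∈ Y, w y

lemma exists_isMaxWeightBasis [DecidableEq α] (M : FinMatroid α) (w : α → β) (X : Finset α) :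
    ∃ Y, M.IsMaxWeightBasis w Y X := by
  classical
  obtain ⟨Y₀, hY₀⟩ := M.exists_isBasisOf X
  obtain ⟨Y, hY, hmax⟩ := exists_max_image (X.powerset.filter (M.IsBasisOf · X))
    (fun Y => ∑ y ∈ Y, w y) ⟨Y₀, mem_filter.2 ⟨mem_powerset.2 hY₀.1, hY₀⟩⟩
  exact ⟨Y, (mem_filter.1 hY).2, fun Z hZ =>
    hmax Z (mem_filter.2 ⟨mem_powerset.2 hZ.1, hZ⟩)⟩

variable [IsOrderedCancelAddMonoid β] [LinearOrder α] {M : FinMatroid α} {w : α → β}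
  {X Y B : Finset α}

lemma IsMaxWeightBasis.card_le_card_filter (hY : M.IsMaxWeightBasis w Y X)
    (hw : StrictMonoOn w X) {t : α} (hBX : B ⊆ X) (hB : M.Indep B) (hBt : ∀ b ∈ B, t ≤ b) :
    B.card ≤ #(Y.filter (t ≤ ·)) := by
  obtain ⟨hYb, hYmax⟩ := hY
  by_contra! hlt
  obtain ⟨x, hxB, hxA, hxI⟩ :=
    M.indep_exchange (M.indep_subset hYb.2.1 (filter_subset _ _)) hB hlt
  have htx := hBt x hxB
  have hxX := hBX hxB
  have hxY : x ∉ Y := fun h => hxA (mem_filter.2 ⟨h, htx⟩)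
  obtain ⟨D, hAD, hDsub, hDI, hDc⟩ := M.exists_augment hxI hYb.2.1
    (hYb.card_le (insert_subset hxX ((filter_subset _ _).trans hYb.1)) hxI)
  have hDxY : D ⊆ insert x Y :=
    hDsub.trans (union_subset (insert_subset_insert _ (filter_subset _ _)) (subset_insert _ _))
  have hD : M.IsBasisOf D X := isBasisOf_of_forall_card_le
    (hDxY.trans (insert_subset hxX hYb.1)) hDI fun Z hZX hZ => hDc ▸ hYb.card_le hZX hZ
  -- `D` is `insert x Y` with one `y ∈ Y` removed, and `y` lies below `t`, hence below `x`
  obtain ⟨y, hyxY, hyD⟩ : ∃ y ∈ insert x Y, y ∉ D := not_subset.1 fun h => by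
    have := card_le_card h
    rw [card_insert_of_notMem hxY] at this
    omega
  have hyY : y ∈ Y := (mem_insert.1 hyxY).resolve_left <| by
    rintro rfl
    exact hyD (hAD (mem_insert_self _ _))
  have hyx : y < x := by
    by_contra! hxy
    exact hyD (hAD (mem_insert_of_mem (mem_filter.2 ⟨hyY, htx.trans hxy⟩)))
  have hDeq : insert y D = insert x Y := eq_of_subset_of_card_le (insert_subset hyxY hDxY) <| by
    rw [card_insert_of_notMem hxY, card_insert_of_notMem hyD, hDc]
  have hsum : w y + ∑ d ∈ D, w d = w x + ∑ z ∈ Y, w z := by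
    rw [← sum_insert hyD, hDeq, sum_insert hxY]
  have hwyx : w y < w x := hw (hYb.1 hyY) hxX hyx
  have := add_le_add_right (hYmax D hD) (w y)
  rw [hsum] at this
  exact (le_of_add_le_add_right this).not_gt hwyx

end MaxWeight

end FinMatroid

theorem exists_dominant_basis_general
    {α : Type*} [LinearOrder α] (M : FinMatroid α)
    (X : Finset α) :
    ∃ Ystar : Finset α, M.IsBasisOf Ystar X ∧
      ∀ Y : Finset α, M.IsBasisOf Y X →
        List.Forall₂ (· ≤ ·) (Y.sort (· ≤ ·)) (Ystar.sort (· ≤ ·)) := by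
  obtain ⟨Ystar, hmax⟩ := M.exists_isMaxWeightBasis (fun a => #(X.filter (· ≤ a))) X
  refine ⟨Ystar, hmax.1, fun Y hY => forall₂_sort_of_card_filter_le (hY.card_eq hmax.1) ?_⟩
  intro t
  exact hmax.card_le_card_filter X.strictMonoOn_card_filter_le ((filter_subset _ _).trans hY.1)
    (M.indep_subset hY.2.1 (filter_subset _ _)) fun b hb => (mem_filter.1 hb).2

/-- Gale's lemma: for every `X` there is a basis `Y*` of `X` that dominates
every basis `Y` of `X` priority-wise: enumerating both bases in decreasing
priority order (all bases of `X` have the same cardinality), each element of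
`Y*` has weakly higher priority than the corresponding element of `Y`.
Equivalently, enumerating both in increasing order, the two lists are
componentwise related by `≤`. -/
theorem exists_dominant_basis
    {α : Type*} [Fintype α] [LinearOrder α] (M : FinMatroid α)
    (X : Finset α) :
    ∃ Ystar : Finset α, M.IsBasisOf Ystar X ∧
      ∀ Y : Finset α, M.IsBasisOf Y X →
        List.Forall₂ (· ≤ ·) (Y.sort (· ≤ ·)) (Ystar.sort (· ≤ ·)) :=
  exists_dominant_basis_general M X
end

section
/- Let X be a matching such that X is individually rational and, for every institution i, the choice rule C_i is path independent and C_i(D_i(X)) = X_i, where D_i(X) is the demand of institution i at X. Then X is stable with respect to the profile (C_i): X is individually rational, C_i(X_i) = X_i for every institution i, and there is no contract x ∈ 𝒳 with x ≻_{α(x)} X_{α(x)} and x ∈ C_{ι(x)}(X_{ι(x)} ∪ {x}). -/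
/- Matching with contracts setup: `A` is the set of agents, `I` the set of
institutions, and `X` the finite set of contracts; `ag x` and `inst x` are the
agent and the institution of contract `x`.  The strict preference of agent
`ag x` is encoded by `pr : X → Option X → Prop`, where `pr x o` means that
agent `ag x` strictly prefers the contract `x` to the outcome `o` (`o` is
`some y` for a contract `y` of the same agent, or `none` for the null
contract `∅`).  A matching is a finite set of contracts `Xm` with at most one
contract per agent; `asg a` is the contract of agent `a` in `Xm` (or `none`),
so that `X_{α(x)} = asg (ag x)`. -/

open Classical in
/-- The set `𝒳_i` of all contracts of institution `i`. -/
noncomputable def contractsOf {I X : Type*} [Fintype X] (inst : X → I)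
    (i : I) : Finset X :=
  Finset.univ.filter fun x => inst x = i

open Classical in
/-- `X_i`: the set of contracts of institution `i` in the matching `Xm`. -/
noncomputable def matchedAt {I X : Type*} (inst : X → I) (Xm : Finset X)
    (i : I) : Finset X :=
  Xm.filter fun x => inst x = i

open Classical in
/-- The demand `D_i(X)` of institution `i` at the matching with assignment
`asg`: the contracts of `i` that their agents weakly prefer to their
assignment. -/
noncomputable def demandAt {A I X : Type*} [Fintype X] (ag : X → A)
    (inst : X → I) (pr : X → Option X → Prop) (asg : A → Option X)
    (i : I) : Finset X :=
  Finset.univ.filter fun x =>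
    inst x = i ∧ (pr x (asg (ag x)) ∨ asg (ag x) = some x)

/-! For a path-independent choice rule, removing rejected alternatives does not change the choice:
if `C D ⊆ B ⊆ D` then `C B = C D`.  Applied to `B = X_i ⊆ D_i(X)` this gives institution
rationality, and applied to `B = X_i ∪ {x}` for a contract `x` that its agent prefers to its
assignment (so `x ∈ D_i(X)`) it shows that `x` is chosen only if `x ∈ X_i`, which is
impossible since no contract is preferred to itself. -/

section PathIndependence

variable {α : Type*} [DecidableEq α]

def PathIndependentOn (c : Finset α → Finset α) (S : Finset α) : Prop :=
  ∀ B ⊆ S, ∀ B' ⊆ S, c (B ∪ B') = c (c B ∪ B')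

theorem PathIndependentOn.choice_eq_of_choice_subset {c : Finset α → Finset α}
    {S B D : Finset α} (hc : PathIndependentOn c S) (hD : D ⊆ S) (hBD : B ⊆ D)
    (hcB : c D ⊆ B) : c B = c D := by
  calc c B = c (c D ∪ B) := by rw [Finset.union_eq_right.2 hcB]
    _ = c (D ∪ B) := (hc D hD B (hBD.trans hD)).symm
    _ = c D := by rw [Finset.union_eq_left.2 hBD]

end PathIndependence

section Matching

variable {A I X : Type*} [Fintype X] (ag : X → A) (inst : X → I)
  (pr : X → Option X → Prop) (asg : A → Option X)

theorem demandAt_subset_contractsOf (i : I) :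
    demandAt ag inst pr asg i ⊆ contractsOf inst i := by
  intro x hx
  simp_all [demandAt, contractsOf]

theorem mem_demandAt_of_pr {x : X} (hx : pr x (asg (ag x))) :
    x ∈ demandAt ag inst pr asg (inst x) := by
  simp [demandAt, hx]

theorem matchedAt_subset_demandAt {Xm : Finset X} (hasg : ∀ x ∈ Xm, asg (ag x) = some x)
    (i : I) : matchedAt inst Xm i ⊆ demandAt ag inst pr asg i := by
  intro x hx
  simp only [matchedAt, Finset.mem_filter] at hx
  simp [demandAt, hx.2, hasg x hx.1]

end Matching

theorem stable_of_pathIndependent_choice_of_demand_general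
    {A I X : Type*} [Fintype X] [DecidableEq X]
    (ag : X → A) (inst : X → I)
    (pr : X → Option X → Prop)
    -- `pr` is a strict preference: no contract is preferred to itself
    (hIrr : ∀ x : X, ¬ pr x (some x))
    (Xm : Finset X)
    -- `asg a` is the contract of agent `a` in `Xm`, or `none`
    (asg : A → Option X)
    (hasg : ∀ (a : A) (x : X), asg a = some x ↔ x ∈ Xm ∧ ag x = a)
    -- choice rules of the institutions
    (C : I → Finset X → Finset X)
    -- path independence
    (hPI : ∀ i : I, ∀ B ⊆ contractsOf inst i, ∀ B' ⊆ contractsOf inst i,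
      C i (B ∪ B') = C i (C i B ∪ B'))
    -- individual rationality of `Xm`
    (hIR : ∀ x ∈ Xm, pr x none)
    -- `C_i (D_i(X)) = X_i` for every institution `i`
    (hfix : ∀ i : I, C i (demandAt ag inst pr asg i) = matchedAt inst Xm i) :
    -- stability of `Xm` with respect to `(C i)`:
    (∀ x ∈ Xm, pr x none) ∧
    (∀ i : I, C i (matchedAt inst Xm i) = matchedAt inst Xm i) ∧
    ¬ ∃ x : X, pr x (asg (ag x)) ∧
        x ∈ C (inst x) (insert x (matchedAt inst Xm (inst x))) := by
  have hasg_self : ∀ x ∈ Xm, asg (ag x) = some x := fun x hx => (hasg _ x).2 ⟨hx, rfl⟩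
  have hmatched_demand := matchedAt_subset_demandAt ag inst pr asg hasg_self
  have hchoice : ∀ i B, B ⊆ demandAt ag inst pr asg i → matchedAt inst Xm i ⊆ B →
      C i B = matchedAt inst Xm i := fun i B hBD hMB => by
    rw [← hfix i] at hMB ⊢
    exact PathIndependentOn.choice_eq_of_choice_subset (hPI i)
      (demandAt_subset_contractsOf ag inst pr asg i) hBD hMB
  refine ⟨hIR, fun i => hchoice i _ (hmatched_demand i) subset_rfl, ?_⟩
  rintro ⟨x, hpr, hxC⟩
  rw [hchoice (inst x) _ (Finset.insert_subset (mem_demandAt_of_pr ag inst pr asg hpr)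
    (hmatched_demand _)) (Finset.subset_insert _ _)] at hxC
  simp only [matchedAt, Finset.mem_filter] at hxC
  exact hIrr x (hasg_self x hxC.1 ▸ hpr)

/-- If a matching `Xm` is individually rational and, for every institution
`i`, the choice rule `C i` is path independent (on subsets of `𝒳_i`) and
`C i (D_i(X)) = X_i`, then `Xm` is stable with respect to `(C i)`:
it is individually rational, institution rational (`C i X_i = X_i` for every
`i`), and admits no blocking contract. -/
theorem stable_of_pathIndependent_choice_of_demand
    {A I X : Type*} [Fintype X] [DecidableEq X]
    (ag : X → A) (inst : X → I)
    (pr : X → Option X → Prop)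
    -- `pr` is a strict preference: no contract is preferred to itself
    (hIrr : ∀ x : X, ¬ pr x (some x))
    (Xm : Finset X)
    -- `Xm` is a matching: at most one contract per agent
    (hmatch : ∀ x ∈ Xm, ∀ y ∈ Xm, ag x = ag y → x = y)
    -- `asg a` is the contract of agent `a` in `Xm`, or `none`
    (asg : A → Option X)
    (hasg : ∀ (a : A) (x : X), asg a = some x ↔ x ∈ Xm ∧ ag x = a)
    -- choice rules of the institutions
    (C : I → Finset X → Finset X)
    (hCsub : ∀ i : I, ∀ B ⊆ contractsOf inst i, C i B ⊆ B)
    -- path independence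
    (hPI : ∀ i : I, ∀ B ⊆ contractsOf inst i, ∀ B' ⊆ contractsOf inst i,
      C i (B ∪ B') = C i (C i B ∪ B'))
    -- individual rationality of `Xm`
    (hIR : ∀ x ∈ Xm, pr x none)
    -- `C_i (D_i(X)) = X_i` for every institution `i`
    (hfix : ∀ i : I, C i (demandAt ag inst pr asg i) = matchedAt inst Xm i) :
    -- stability of `Xm` with respect to `(C i)`:
    (∀ x ∈ Xm, pr x none) ∧
    (∀ i : I, C i (matchedAt inst Xm i) = matchedAt inst Xm i) ∧
    ¬ ∃ x : X, pr x (asg (ag x)) ∧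
        x ∈ C (inst x) (insert x (matchedAt inst Xm (inst x))) :=
  stable_of_pathIndependent_choice_of_demand_general ag inst pr hIrr Xm asg hasg C hPI hIR hfix
end

section
/- Let i be an institution with capacity q_i ∈ ℕ and let X be a matching. Then |X_i| = min(|D_i(X)|, q_i) if and only if the following two conditions hold: |X_i| ≤ q_i, and whenever there exists a contract x ∈ 𝒳_i with x ≻_{α(x)} X_{α(x)}, we have |X_i| = q_i. (That is, a matching satisfies the extension of the non-wastefulness choice axiom at institution i if and only if it satisfies non-wastefulness for institution i.) -/
/-- A matching satisfies the extension `|X_i| = min (|D_i(X)|, q_i)` of the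
non-wastefulness choice axiom at institution `i` if and only if it satisfies
non-wastefulness for institution `i`: `|X_i| ≤ q_i` and, whenever some
contract `x ∈ 𝒳_i` is strictly preferred by its agent to the agent's
assignment, `|X_i| = q_i`. -/
theorem nonWasteful_extension_iff
    {A I X : Type*} [Fintype X] [DecidableEq X]
    (ag : X → A) (inst : X → I)
    (pr : X → Option X → Prop)
    -- `pr` is a strict preference: no contract is preferred to itself
    (hIrr : ∀ x : X, ¬ pr x (some x))
    (Xm : Finset X)
    -- `Xm` is a matching: at most one contract per agent
    (hmatch : ∀ x ∈ Xm, ∀ y ∈ Xm, ag x = ag y → x = y)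
    -- `asg a` is the contract of agent `a` in `Xm`, or `none`
    (asg : A → Option X)
    (hasg : ∀ (a : A) (x : X), asg a = some x ↔ x ∈ Xm ∧ ag x = a)
    (i : I) (q : ℕ) :
    (matchedAt inst Xm i).card = min (demandAt ag inst pr asg i).card q ↔
      ((matchedAt inst Xm i).card ≤ q ∧
        ((∃ x : X, inst x = i ∧ pr x (asg (ag x))) →
          (matchedAt inst Xm i).card = q)) := by
  classical
  have hsub : matchedAt inst Xm i ⊆ demandAt ag inst pr asg i := by
    intro x hx
    simp only [matchedAt, Finset.mem_filter] at hx
    simp only [demandAt, Finset.mem_filter, Finset.mem_univ, true_and]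
    exact ⟨hx.2, Or.inr ((hasg (ag x) x).mpr ⟨hx.1, rfl⟩)⟩
  constructor
  · intro h
    have hle : (matchedAt inst Xm i).card ≤ q := by omega
    refine ⟨hle, fun ⟨x, hxi, hxp⟩ => ?_⟩
    have hxd : x ∈ demandAt ag inst pr asg i := by
      simp only [demandAt, Finset.mem_filter, Finset.mem_univ, true_and]
      exact ⟨hxi, Or.inl hxp⟩
    have hxm : x ∉ matchedAt inst Xm i := by
      intro hxm
      simp only [matchedAt, Finset.mem_filter] at hxm
      have := (hasg (ag x) x).mpr ⟨hxm.1, rfl⟩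
      rw [this] at hxp
      exact hIrr x hxp
    have hlt : (matchedAt inst Xm i).card < (demandAt ag inst pr asg i).card :=
      Finset.card_lt_card (Finset.ssubset_iff_of_subset hsub |>.mpr ⟨x, hxd, hxm⟩)
    omega
  · rintro ⟨hle, himp⟩
    by_cases hex : ∃ x : X, inst x = i ∧ pr x (asg (ag x))
    · have hq := himp hex
      have : q ≤ (demandAt ag inst pr asg i).card := hq ▸ Finset.card_le_card hsub
      omega
    · have heq : demandAt ag inst pr asg i = matchedAt inst Xm i := by
        apply Finset.Subset.antisymm _ hsub
        intro x hx
        simp only [demandAt, Finset.mem_filter, Finset.mem_univ, true_and] at hx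
        obtain ⟨hxi, hor⟩ := hx
        have hsome : asg (ag x) = some x := by
          rcases hor with hp | hs
          · exact absurd ⟨x, hxi, hp⟩ hex
          · exact hs
        have := (hasg (ag x) x).mp hsome
        simp only [matchedAt, Finset.mem_filter]
        exact ⟨this.1, hxi⟩
      rw [heq]
      omega
end
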